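/- arXiv:2108.07703 — 3 statements merged into one kernel-verified Lean document; each statement's English description precedes it below -/
import Mathlib

section
/- Let r ≥ 1, b ∈ N_r, and B ⊆ supp(b). Then m_{C(b,B)} = m^b · Π_{j∈B} Π_{x} x, where the inner product runs over those variables x ∈ {x_1,…,x_n} that divide m_{τ(j)} but do not divide m_j; equivalently, m_{C(b,B)} = m^b · Π_{j∈B} (m_{τ(j)}/gcd(m_j, m_{τ(j)})). -/
open Finset MvPolynomial

noncomputable section

/-- The standard basis vector `f_i` of `ℤ_{≥0}^{q+1}` (as a function `ℕ → ℕ`). -/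
def fvec (i : ℕ) : ℕ → ℕ := fun j => if j = i then 1 else 0

/-- `a ∈ N_r`: a vector in `ℤ_{≥0}^{q+1}` whose coordinates sum to `r`. -/
def Nr (q r : ℕ) (a : ℕ → ℕ) : Prop :=
  (∀ j, q < j → a j = 0) ∧ ∑ j ∈ Finset.range (q + 1), a j = r

/-- The support `supp(a) = {j ∈ {1,…,q} : a_j ≠ 0}`. -/
def suppv (q : ℕ) (a : ℕ → ℕ) : Finset ℕ := (Finset.Icc 1 q).filter (fun j => a j ≠ 0)

/-- `b − Σ_{j∈B'}(f_j − f_{τ(j)})` (valid in `ℕ` whenever `B' ⊆ supp(b)`). -/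
def moveSet (τ : ℕ → ℕ) (b : ℕ → ℕ) (B' : Finset ℕ) : ℕ → ℕ :=
  fun j => b j + (∑ i ∈ B', fvec (τ i) j) - ∑ i ∈ B', fvec i j

/-- The square-free monomial with support `S` in `R = k[x_1,…,x_n]`. -/
def mon (k : Type) [Field k] (n : ℕ) (S : Finset (Fin n)) : MvPolynomial (Fin n) k :=
  ∏ x ∈ S, X x

/-- The monomial `m^a = m_0^{a_0} ⋯ m_q^{a_q}`. -/
def mPow (k : Type) [Field k] (n q : ℕ) (S : ℕ → Finset (Fin n)) (a : ℕ → ℕ) :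
    MvPolynomial (Fin n) k :=
  ∏ i ∈ Finset.range (q + 1), (mon k n (S i)) ^ (a i)

/-- The exponent vector of the monomial `m^c`. -/
def expOf (n q : ℕ) (S : ℕ → Finset (Fin n)) (c : ℕ → ℕ) : Fin n → ℕ :=
  fun x => ∑ i ∈ Finset.range (q + 1), c i * (if x ∈ S i then 1 else 0)

/-- `m_{C(b,B)}`: the least common multiple of the monomials `m^c` over all
`c = b − Σ_{j∈B'}(f_j − f_{τ(j)})` with `B' ⊆ B` (computed as the monomial whose
exponent vector is the supremum of the exponent vectors). -/
def mC (k : Type) [Field k] (n q : ℕ) (S : ℕ → Finset (Fin n)) (τ : ℕ → ℕ)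
    (b : ℕ → ℕ) (B : Finset ℕ) : MvPolynomial (Fin n) k :=
  monomial (Finsupp.equivFunOnFinite.symm
    fun x => B.powerset.sup fun B' => expOf n q S (moveSet τ b B') x) 1

/-- The map `π : R^{q+1} → R` sending the `i`-th basis vector to `m_i`. -/
def piMap (k : Type) [Field k] (n q : ℕ) (S : ℕ → Finset (Fin n)) :
    (Fin (q + 1) → MvPolynomial (Fin n) k) →ₗ[MvPolynomial (Fin n) k]
      MvPolynomial (Fin n) k :=
  ∑ i : Fin (q + 1), (LinearMap.proj i).smulRight (mon k n (S i.1))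

/-- `i` as an element of `Fin (q+1)` (for `i ≤ q`). -/
def fi (q i : ℕ) : Fin (q + 1) := ⟨i % (q + 1), Nat.mod_lt _ (Nat.succ_pos q)⟩

/-- The syzygy `(lcm(m_i, m_{τ(i)})/m_i)·ε_i − (lcm(m_i, m_{τ(i)})/m_{τ(i)})·ε_{τ(i)}`. -/
def syzV (k : Type) [Field k] (n q : ℕ) (S : ℕ → Finset (Fin n)) (τ : ℕ → ℕ) (i : ℕ) :
    Fin (q + 1) → MvPolynomial (Fin n) k :=
  fun l =>
    (if l = fi q i then ∏ x ∈ S (τ i) \ S i, X x else 0)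
      - (if l = fi q (τ i) then ∏ x ∈ S i \ S (τ i), X x else 0)

/-- Minimal generation: no `m_i` divides `m_j` for `i ≠ j`. -/
def MinGen (n q : ℕ) (S : ℕ → Finset (Fin n)) : Prop :=
  ∀ i ≤ q, ∀ j ≤ q, i ≠ j → ¬ S i ⊆ S j

/-- The Faridi–Hersey property of the rooted labeled tree given by `τ`: the first syzygy
module of `(m_0,…,m_q)` is generated by the `q` syzygies coming from the edges. -/
def TreeSyz (k : Type) [Field k] (n q : ℕ) (S : ℕ → Finset (Fin n)) (τ : ℕ → ℕ) : Prop :=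
  LinearMap.ker (piMap k n q S)
    = Submodule.span (MvPolynomial (Fin n) k)
        {v | ∃ i ∈ Finset.Icc 1 q, v = syzV k n q S τ i}

/-!
Monomials are compared through their exponents, one variable `x` at a time. Passing from `b`
to `c = b − Σ_{j∈B'} (f_j − f_{τ(j)})` changes the `x`-exponent of `m^c` by
`Σ_{j∈B'} ([x ∣ m_{τ(j)}] − [x ∣ m_j])`, so over `B' ⊆ B` it is largest when `B'` consists of
exactly those `j` with `x ∣ m_{τ(j)}` and `x ∤ m_j`; the lcm therefore exceeds `m^b` by one
factor `x` for each such `j`.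
-/

theorem mem_suppv {q : ℕ} {b : ℕ → ℕ} {j : ℕ} :
    j ∈ suppv q b ↔ (1 ≤ j ∧ j ≤ q) ∧ b j ≠ 0 := by
  simp only [suppv, Finset.mem_filter, Finset.mem_Icc]

theorem moveSet_add_sum_fvec (τ : ℕ → ℕ) {b : ℕ → ℕ} {B' : Finset ℕ}
    (hb : ∀ i ∈ B', b i ≠ 0) (j : ℕ) :
    moveSet τ b B' j + ∑ i ∈ B', fvec i j = b j + ∑ i ∈ B', fvec (τ i) j := by
  have hle : ∑ i ∈ B', fvec i j ≤ b j := by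
    simp only [fvec, Finset.sum_ite_eq]
    split_ifs with hj
    · exact Nat.one_le_iff_ne_zero.mpr (hb j hj)
    · exact Nat.zero_le _
  exact Nat.sub_add_cancel (le_add_right hle)

section expOf

variable {n q : ℕ} (S : ℕ → Finset (Fin n)) (x : Fin n)

theorem expOf_add (c d : ℕ → ℕ) : expOf n q S (c + d) x = expOf n q S c x + expOf n q S d x := by
  simp only [expOf, Pi.add_apply, add_mul, Finset.sum_add_distrib]

theorem expOf_sum {ι : Type*} (s : Finset ι) (c : ι → ℕ → ℕ) :
    expOf n q S (∑ i ∈ s, c i) x = ∑ i ∈ s, expOf n q S (c i) x := by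
  simp only [expOf, Finset.sum_apply, Finset.sum_mul]
  exact Finset.sum_comm

theorem expOf_fvec {i : ℕ} (hi : i ≤ q) :
    expOf n q S (fvec i) x = if x ∈ S i then 1 else 0 := by
  simp only [expOf, fvec, boole_mul]
  rw [Finset.sum_ite_eq', if_pos (Finset.mem_range.mpr (Nat.lt_succ_of_le hi))]

theorem expOf_moveSet_add_sum (τ : ℕ → ℕ) (b : ℕ → ℕ) {B' : Finset ℕ}
    (hB' : B' ⊆ suppv q b) (hτ : ∀ i ∈ B', τ i ≤ q) :
    expOf n q S (moveSet τ b B') x + ∑ i ∈ B', (if x ∈ S i then 1 else 0)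
      = expOf n q S b x + ∑ i ∈ B', (if x ∈ S (τ i) then 1 else 0) := by
  have hmem : ∀ i ∈ B', b i ≠ 0 ∧ i ≤ q := fun i hi =>
    have hi := mem_suppv.mp (hB' hi)
    ⟨hi.2, hi.1.2⟩
  have hfun : moveSet τ b B' + ∑ i ∈ B', fvec i = b + ∑ i ∈ B', fvec (τ i) := by
    ext j
    simpa only [Pi.add_apply, Finset.sum_apply] using
      moveSet_add_sum_fvec τ (fun i hi => (hmem i hi).1) j
  have h := congrArg (fun c => expOf n q S c x) hfun
  simp only [expOf_add, expOf_sum] at h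
  rwa [Finset.sum_congr rfl fun i hi => expOf_fvec S x (hmem i hi).2,
    Finset.sum_congr rfl fun i hi => expOf_fvec S x (hτ i hi)] at h

end expOf

theorem Finset.sup_powerset_eq_add_sum_tsub {ι : Type*} (B : Finset ι) (E : Finset ι → ℕ)
    (a : ℕ) (u v : ι → ℕ) (h : ∀ B' ⊆ B, E B' + ∑ i ∈ B', u i = a + ∑ i ∈ B', v i) :
    B.powerset.sup E = a + ∑ i ∈ B, (v i - u i) := by
  classical
  apply le_antisymm
  · refine Finset.sup_le fun B' hB' => ?_
    have hB' := Finset.mem_powerset.mp hB'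
    have := h B' hB'
    have hv : ∑ i ∈ B', v i ≤ ∑ i ∈ B', (v i - u i) + ∑ i ∈ B', u i := by
      rw [← Finset.sum_add_distrib]
      exact Finset.sum_le_sum fun i _ => le_tsub_add
    have hsub : ∑ i ∈ B', (v i - u i) ≤ ∑ i ∈ B, (v i - u i) :=
      Finset.sum_le_sum_of_subset hB'
    omega
  · -- the maximum is attained at the set of indices where `v` beats `u`
    set B₀ := B.filter fun i => u i ≤ v i
    have hB₀ : B₀ ⊆ B := Finset.filter_subset _ _
    refine le_trans ?_ (Finset.le_sup (Finset.mem_powerset.mpr hB₀))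
    have hv : ∑ i ∈ B₀, v i = ∑ i ∈ B, (v i - u i) + ∑ i ∈ B₀, u i := by
      rw [← Finset.sum_filter_of_ne (f := fun i => v i - u i) (p := fun i => u i ≤ v i)
        fun i _ hi => by omega,
        ← Finset.sum_add_distrib]
      exact Finset.sum_congr rfl fun i hi => (Nat.sub_add_cancel (Finset.mem_filter.mp hi).2).symm
    have := h B₀ hB₀
    omega

theorem sup_expOf_moveSet {n q : ℕ} (S : ℕ → Finset (Fin n)) (τ : ℕ → ℕ) (b : ℕ → ℕ)
    {B : Finset ℕ} (hB : B ⊆ suppv q b) (hτ : ∀ i ∈ B, τ i ≤ q) (x : Fin n) :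
    (B.powerset.sup fun B' => expOf n q S (moveSet τ b B') x)
      = expOf n q S b x + ∑ j ∈ B, (if x ∈ S (τ j) \ S j then 1 else 0) := by
  rw [Finset.sup_powerset_eq_add_sum_tsub B _ _ (fun i => if x ∈ S i then 1 else 0)
    (fun i => if x ∈ S (τ i) then 1 else 0)]
  · congr 1
    refine Finset.sum_congr rfl fun j _ => ?_
    by_cases h₁ : x ∈ S (τ j) <;> by_cases h₂ : x ∈ S j <;> simp [h₁, h₂]
  · intro B' hB'
    exact expOf_moveSet_add_sum S x τ b (hB'.trans hB) fun i hi => hτ i (hB' hi)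

section monomials

variable {σ R : Type*} [CommSemiring R] [Finite σ] [DecidableEq σ]

theorem prod_prod_X_eq_monomial {ι : Type*} (B : Finset ι) (T : ι → Finset σ) :
    ∏ j ∈ B, ∏ x ∈ T j, (X x : MvPolynomial σ R)
      = monomial (Finsupp.equivFunOnFinite.symm fun y => ∑ j ∈ B, if y ∈ T j then 1 else 0) 1 := by
  simp only [X, ← monomial_sum_one]
  refine congrArg (monomial · 1) (Finsupp.ext fun y => ?_)
  simp [Finsupp.single_apply]

end monomials

theorem mPow_eq_monomial (k : Type) [Field k] (n q : ℕ) (S : ℕ → Finset (Fin n)) (a : ℕ → ℕ) :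
    mPow k n q S a = monomial (Finsupp.equivFunOnFinite.symm (expOf n q S a)) 1 := by
  simp only [mPow, mon, X, ← monomial_sum_one, monomial_pow, one_pow]
  refine congrArg (monomial · 1) (Finsupp.ext fun y => ?_)
  simp [expOf, Finsupp.single_apply]

theorem statement6_general (k : Type) [Field k] (n q : ℕ) (S : ℕ → Finset (Fin n))
    (τ : ℕ → ℕ) (hτ : ∀ i, 1 ≤ i → i ≤ q → τ i < i) (b : ℕ → ℕ)
    (B : Finset ℕ) (hB : B ⊆ suppv q b) :
    mC k n q S τ b B
      = mPow k n q S b * ∏ j ∈ B, ∏ x ∈ S (τ j) \ S j, X x ∧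
    mC k n q S τ b B * ∏ j ∈ B, ∏ x ∈ S j ∩ S (τ j), X x
      = mPow k n q S b * ∏ j ∈ B, mon k n (S (τ j)) := by
  classical
  have hτB : ∀ i ∈ B, τ i ≤ q := fun i hi =>
    have hi := mem_suppv.mp (hB hi)
    (hτ i hi.1.1 hi.1.2).le.trans hi.1.2
  simp only [mC, mPow_eq_monomial, mon, prod_prod_X_eq_monomial, monomial_mul, mul_one]
  constructor <;> refine congrArg (monomial · 1) (Finsupp.ext fun x => ?_) <;>
    simp only [Finsupp.coe_equivFunOnFinite_symm, Finsupp.add_apply,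
      sup_expOf_moveSet S τ b hB hτB, add_assoc, ← Finset.sum_add_distrib]
  congr 1
  refine Finset.sum_congr rfl fun j _ => ?_
  by_cases h₁ : x ∈ S (τ j) <;> by_cases h₂ : x ∈ S j <;> simp [h₁, h₂]

/-- `m_{C(b,B)} = m^b · Π_{j∈B} Π_{x | m_{τ(j)}, x ∤ m_j} x`; equivalently
`m_{C(b,B)} = m^b · Π_{j∈B} (m_{τ(j)} / gcd(m_j, m_{τ(j)}))`, written here without
division as `m_{C(b,B)} · Π_{j∈B} gcd(m_j, m_{τ(j)}) = m^b · Π_{j∈B} m_{τ(j)}`. -/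
theorem statement6 (k : Type) [Field k] (n q : ℕ) (hq : 1 ≤ q)
    (S : ℕ → Finset (Fin n)) (hmin : MinGen n q S)
    (τ : ℕ → ℕ) (hτ : ∀ i, 1 ≤ i → i ≤ q → τ i < i)
    (hsyz : TreeSyz k n q S τ)
    (r : ℕ) (hr : 1 ≤ r) (b : ℕ → ℕ) (hb : Nr q r b)
    (B : Finset ℕ) (hB : B ⊆ suppv q b) :
    mC k n q S τ b B
      = mPow k n q S b * ∏ j ∈ B, ∏ x ∈ S (τ j) \ S j, X x ∧
    mC k n q S τ b B * ∏ j ∈ B, ∏ x ∈ S j ∩ S (τ j), X x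
      = mPow k n q S b * ∏ j ∈ B, mon k n (S (τ j)) :=
  statement6_general k n q S τ hτ b B hB
end
end

section
/- Let I be an ideal of the polynomial ring R = k[x_1,…,x_n] over a field k that has projective dimension one and is minimally generated by q+1 square-free monomials. Then q+1 ≤ n. -/
/-!
The kernel of `π : R^{q+1} → I` is generated by the Taylor syzygies `σ_ij`, and it is free of some
rank `t ≤ q`. By Nakayama's lemma at the origin, at most `q` of them, indexed by a set `E` of
pairs, generate all `σ_ij` up to a factor `f` with `f(0) ≠ 0`. Applying the partial presentation
maps `ψ_C = ∑_{i ∈ C} m_i e_i^*` to such relations shows: every cut `C` of the generators is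
crossed by a pair of `E`, and if a single pair `{a, b}` crosses a cut separating `i` from `j`,
then `lcm(m_a, m_b) ∣ lcm(m_i, m_j)`.

Since `|E| < q + 1`, some generator `m_ℓ` is crossed by a single pair `{ℓ, p}`; then every
variable of `m_p / gcd(m_p, m_ℓ)` divides all `m_j` with `j ≠ ℓ`. Removing `m_ℓ`, the pairs
through `ℓ` and these variables preserves all of the above, so induction yields `q + 1` distinct
variables.
-/

open Finset MvPolynomial

noncomputable section

/-- The ideal `I = (m_0, …, m_q)`. -/
def IspI (k : Type) [Field k] (n q : ℕ) (S : ℕ → Finset (Fin n)) :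
    Ideal (MvPolynomial (Fin n) k) :=
  Ideal.span {f | ∃ i ≤ q, f = mon k n (S i)}

/-- `pd_R(I) = 1` for the ideal minimally generated by `m_0,…,m_q`:
the kernel of the minimal presentation `π` is free (a second syzygy module is zero),
and is nonzero. -/
def PdOne (k : Type) [Field k] (n q : ℕ) (S : ℕ → Finset (Fin n)) : Prop :=
  (∃ (t : ℕ) (d : (Fin t → MvPolynomial (Fin n) k)
      →ₗ[MvPolynomial (Fin n) k] (Fin (q + 1) → MvPolynomial (Fin n) k)),
    Function.Injective d ∧ LinearMap.range d = LinearMap.ker (piMap k n q S)) ∧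
  LinearMap.ker (piMap k n q S) ≠ ⊥

section Cuts

variable {ι α : Type*}

def Crosses (C : Finset ι) (e : ι × ι) : Prop := Xor (e.1 ∈ C) (e.2 ∈ C)

/-- Satisfied by the supports `T i` of the generators when the Taylor syzygies indexed by `E`
generate all syzygies up to a unit at the origin. -/
def CutCondition [DecidableEq α] (V : Finset ι) (T : ι → Finset α) (E : Finset (ι × ι)) :
    Prop :=
  ∀ C : Finset ι, ∀ i ∈ V, ∀ j ∈ V, i ∈ C → j ∉ C →
    (∃ e ∈ E, Crosses C e) ∧
      ∀ e₀ : ι × ι, (∀ e ∈ E, Crosses C e → e = e₀) → T e₀.1 ∪ T e₀.2 ⊆ T i ∪ T j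

theorem crosses_singleton {v : ι} {e : ι × ι} : Crosses {v} e ↔ Xor (e.1 = v) (e.2 = v) := by
  simp only [Crosses, mem_singleton]

theorem exists_leaf_of_card_lt {V : Finset ι} {E : Finset (ι × ι)}
    (hE : ∀ e ∈ E, e.1 ∈ V ∧ e.2 ∈ V) (hcard : #E < #V)
    (hcross : ∀ v ∈ V, ∃ e ∈ E, Crosses {v} e) :
    ∃ ℓ ∈ V, ∃ p ∈ V, p ≠ ℓ ∧ ∃ e₀ ∈ E, (e₀ = (ℓ, p) ∨ e₀ = (p, ℓ)) ∧
      ∀ e ∈ E, Crosses {ℓ} e → e = e₀ := by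
  classical
  obtain ⟨ℓ, hℓ, e₀, he₀, hleaf⟩ : ∃ ℓ ∈ V, ∃ e₀ ∈ E, ∀ e ∈ E, Crosses {ℓ} e → e = e₀ := by
    by_contra! h
    have habove : ∀ v ∈ V, 2 ≤ #(E.bipartiteAbove (fun v e => Crosses {v} e) v) := by
      intro v hv
      obtain ⟨e₁, he₁, hc₁⟩ := hcross v hv
      obtain ⟨e₂, he₂, hc₂, hne⟩ := h v hv e₁ he₁
      exact one_lt_card.mpr ⟨e₂, by simp [he₂, hc₂], e₁, by simp [he₁, hc₁], hne⟩
    have hbelow : ∀ e ∈ E, #(V.bipartiteBelow (fun v e => Crosses {v} e) e) ≤ 2 := by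
      intro e _
      refine (card_le_card fun v hv => ?_).trans (card_le_two (a := e.1) (b := e.2))
      rcases crosses_singleton.mp (mem_bipartiteBelow _ |>.mp hv).2 with ⟨h1, -⟩ | ⟨h2, -⟩ <;>
        simp [*]
    have := card_nsmul_le_card_nsmul _ habove hbelow
    simp only [smul_eq_mul] at this
    omega
  obtain ⟨e, he, hc⟩ := hcross ℓ hℓ
  obtain rfl := hleaf e he hc
  rcases crosses_singleton.mp hc with ⟨h1, h2⟩ | ⟨h2, h1⟩
  · exact ⟨ℓ, hℓ, e.2, (hE e he).2, h2, e, he, Or.inl (by rw [← h1]), hleaf⟩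
  · exact ⟨ℓ, hℓ, e.1, (hE e he).1, h1, e, he, Or.inr (by rw [← h2]), hleaf⟩

theorem two_le_card_union [DecidableEq α] {A B : Finset α} (hAB : ¬A ⊆ B) (hBA : ¬B ⊆ A) :
    2 ≤ #(A ∪ B) := by
  rw [← card_sdiff_add_card]
  have h1 := (sdiff_nonempty.mpr hAB).card_pos
  have h2 : B.Nonempty := nonempty_of_ne_empty (by rintro rfl; exact hBA (empty_subset A))
  have := h2.card_pos
  omega

theorem card_biUnion_sdiff_add_card_le [DecidableEq α] {V W : Finset ι} {T : ι → Finset α}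
    {D : Finset α} (hWV : W ⊆ V) {p : ι} (hp : p ∈ V) (hD : D ⊆ T p) :
    #(W.biUnion fun j => T j \ D) + #D ≤ #(V.biUnion T) := by
  rw [← card_union_of_disjoint ((disjoint_biUnion_left _ _ _).mpr fun _ _ => sdiff_disjoint)]
  exact card_le_card (union_subset
    (biUnion_subset.mpr fun j hj => sdiff_subset.trans (subset_biUnion_of_mem T (hWV hj)))
    (hD.trans (subset_biUnion_of_mem T hp)))

namespace CutCondition

variable [DecidableEq α] {V : Finset ι} {T : ι → Finset α} {E : Finset (ι × ι)}
  {ℓ p : ι} {e₀ : ι × ι}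

theorem sdiff_subset_of_leaf (h : CutCondition V T E) (hℓ : ℓ ∈ V)
    (he₀ : e₀ = (ℓ, p) ∨ e₀ = (p, ℓ)) (hleaf : ∀ e ∈ E, Crosses {ℓ} e → e = e₀)
    {j : ι} (hj : j ∈ V) (hjℓ : j ≠ ℓ) : T p \ T ℓ ⊆ T j := by
  have hdom := (h {ℓ} ℓ hℓ j hj (mem_singleton_self ℓ) (by simpa using hjℓ)).2 e₀ hleaf
  intro x hx
  rw [mem_sdiff] at hx
  have : x ∈ T ℓ ∪ T j := hdom (by rcases he₀ with rfl | rfl <;> simp [hx.1])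
  simpa [hx.2] using this

theorem erase_leaf [DecidableEq ι] [Fintype ι] (h : CutCondition V T E)
    (he₀ : e₀ = (ℓ, p) ∨ e₀ = (p, ℓ)) (hleaf : ∀ e ∈ E, Crosses {ℓ} e → e = e₀)
    (D : Finset α) :
    CutCondition (V.erase ℓ) (fun j => T j \ D) (E.filter fun e => e.1 ≠ ℓ ∧ e.2 ≠ ℓ) := by
  intro C i hi j hj hiC hjC
  -- `C'` extends `C` to `ℓ` so that the edge `e₀ = {ℓ, p}` does not cross it.
  let C' : Finset ι := univ.filter fun x => (if x = ℓ then p else x) ∈ C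
  have hmem : ∀ x, x ≠ ℓ → (x ∈ C' ↔ x ∈ C) := fun x hx => by simp [C', hx]
  have hC' : ∀ e ∈ E, Crosses C' e → (e.1 ≠ ℓ ∧ e.2 ≠ ℓ) ∧ Crosses C e := by
    intro e he hcross
    have hℓ : e.1 ≠ ℓ ∧ e.2 ≠ ℓ := by
      have h₀ : ¬Crosses C' e₀ := by rcases he₀ with rfl | rfl <;> simp [Crosses, C', Xor]
      have hne : e.1 ≠ e.2 := fun h12 => by simp [Crosses, Xor, h12] at hcross
      by_contra hcon
      refine h₀ (hleaf e he (crosses_singleton.mpr ?_) ▸ hcross)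
      grind [Xor]
    exact ⟨hℓ, by simpa only [Crosses, hmem _ hℓ.1, hmem _ hℓ.2] using hcross⟩
  obtain ⟨hcross, hdom⟩ := h C' i (mem_of_mem_erase hi) j (mem_of_mem_erase hj)
    ((hmem i (ne_of_mem_erase hi)).mpr hiC) (by rwa [hmem j (ne_of_mem_erase hj)])
  refine ⟨?_, fun e₁ he₁ => ?_⟩
  · obtain ⟨e, he, hc⟩ := hcross
    exact ⟨e, mem_filter.mpr ⟨he, (hC' e he hc).1⟩, (hC' e he hc).2⟩
  · have := hdom e₁ fun e he hc =>
      he₁ e (mem_filter.mpr ⟨he, (hC' e he hc).1⟩) (hC' e he hc).2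
    simp only [← union_sdiff_distrib]
    exact sdiff_subset_sdiff this le_rfl

theorem card_le_card_biUnion [DecidableEq ι] [Fintype ι] (h : CutCondition V T E)
    (hV : 2 ≤ #V) (hE : ∀ e ∈ E, e.1 ∈ V ∧ e.2 ∈ V) (hcard : #E < #V)
    (hT : ∀ i ∈ V, ∀ j ∈ V, T i ⊆ T j → i = j) : #V ≤ #(V.biUnion T) := by
  induction V using Finset.strongInduction generalizing T E with
  | H V ih =>
  rcases hV.eq_or_lt with hV2 | hV3
  · obtain ⟨a, b, hab, rfl⟩ := card_eq_two.mp hV2.symm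
    simp only [biUnion_insert, singleton_biUnion, ← hV2]
    exact two_le_card_union (fun hs => hab (hT a (by simp) b (by simp) hs))
      (fun hs => hab (hT b (by simp) a (by simp) hs).symm)
  obtain ⟨ℓ, hℓ, p, hp, hpℓ, e₀, he₀E, he₀, hleaf⟩ := exists_leaf_of_card_lt hE hcard
    fun v hv => by
      obtain ⟨w, hw, hwv⟩ := exists_mem_ne (s := V) (by omega) v
      exact (h {v} v hv w hw (mem_singleton_self v) (by simpa using hwv)).1
  set D := T p \ T ℓ
  have hD : ∀ j ∈ V, j ≠ ℓ → D ⊆ T j := fun j hj hjℓ =>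
    h.sdiff_subset_of_leaf hℓ he₀ hleaf hj hjℓ
  have hDne : D.Nonempty := sdiff_nonempty.mpr fun hs => hpℓ (hT p hp ℓ hℓ hs)
  have hE' : #(E.filter fun e => e.1 ≠ ℓ ∧ e.2 ≠ ℓ) < #E :=
    card_lt_card (filter_ssubset.mpr ⟨e₀, he₀E, by rcases he₀ with rfl | rfl <;> simp⟩)
  have IH := ih (V.erase ℓ) (erase_ssubset hℓ) (h.erase_leaf he₀ hleaf D)
    (by rw [card_erase_of_mem hℓ]; omega)
    (fun e he => by
      obtain ⟨he, h1, h2⟩ := mem_filter.mp he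
      exact ⟨mem_erase.mpr ⟨h1, (hE e he).1⟩, mem_erase.mpr ⟨h2, (hE e he).2⟩⟩)
    (by rw [card_erase_of_mem hℓ]; omega)
    (fun i hi j hj hs => hT i (mem_of_mem_erase hi) j (mem_of_mem_erase hj) <|
      le_sdiff_sup.trans ((sup_le_sup_right hs D).trans
        (sdiff_sup_cancel (hD j (mem_of_mem_erase hj) (ne_of_mem_erase hj))).le))
  calc #V = #(V.erase ℓ) + 1 := (card_erase_add_one hℓ).symm
    _ ≤ #((V.erase ℓ).biUnion fun j => T j \ D) + #D := add_le_add IH hDne.card_pos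
    _ ≤ #(V.biUnion T) := card_biUnion_sdiff_add_card_le (erase_subset ℓ V) hp sdiff_subset

end CutCondition

end Cuts

section LocalGenerators

open scoped Pointwise

theorem exists_finset_card_le_finrank_span_image_eq {K V ι : Type*} [Field K] [AddCommGroup V]
    [Module K V] [FiniteDimensional K V] [Finite ι] (v : ι → V) :
    ∃ E : Finset ι, #E ≤ Module.finrank K V ∧
      Submodule.span K (v '' E) = Submodule.span K (Set.range v) := by
  obtain ⟨b, -, -, hspan, hli⟩ :=
    exists_linearIndepOn_extension (linearIndepOn_empty K v) (Set.empty_subset Set.univ)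
  have := Fintype.ofFinite b
  refine ⟨b.toFinset, ?_, ?_⟩
  · rw [Set.toFinset_card]
    exact hli.fintype_card_le_finrank
  · rw [Set.coe_toFinset, ← Set.image_univ]
    exact le_antisymm (Submodule.span_mono (Set.image_mono (Set.subset_univ b)))
      (Submodule.span_le.mpr hspan)

theorem pi_univ_le_smul_top {R : Type*} [CommRing R] (I : Ideal R) (t : ℕ) :
    Submodule.pi Set.univ (fun _ : Fin t => I) ≤ I • (⊤ : Submodule R (Fin t → R)) := by
  intro x hx
  rw [pi_eq_sum_univ x]
  exact Submodule.sum_mem _ fun i _ => Submodule.smul_mem_smul (hx i (Set.mem_univ i)) trivial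

theorem exists_finset_card_le_smul_top_le_span {R ι : Type*} [CommRing R] [Finite ι]
    (𝔪 : Ideal R) [𝔪.IsMaximal] {t : ℕ} {τ : ι → Fin t → R}
    (hτ : Submodule.span R (Set.range τ) = ⊤) :
    ∃ E : Finset ι, #E ≤ t ∧ ∃ r : R, r - 1 ∈ 𝔪 ∧
      r • (⊤ : Submodule R (Fin t → R)) ≤ Submodule.span R (τ '' E) := by
  let _ := Ideal.Quotient.field 𝔪
  let θ : (Fin t → R) →ₗ[R] Fin t → R ⧸ 𝔪 := 𝔪.mkQ.compLeft (Fin t)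
  obtain ⟨E, hE, hspan⟩ := exists_finset_card_le_finrank_span_image_eq (K := R ⧸ 𝔪) (θ ∘ τ)
  refine ⟨E, by simpa using hE, ?_⟩
  have hsurj : Function.Surjective (algebraMap R (R ⧸ 𝔪)) := Ideal.Quotient.mk_surjective
  have hθ : (Submodule.span R (τ '' E)).map θ = ⊤ := by
    rw [Submodule.map_span, ← Set.image_comp, ← Submodule.restrictScalars_span R _ hsurj, hspan,
      Submodule.restrictScalars_span R _ hsurj, Set.range_comp, ← Submodule.map_span, hτ,
      Submodule.map_top, LinearMap.range_eq_top]
    exact fun y => ⟨fun i => (hsurj (y i)).choose, funext fun i => (hsurj (y i)).choose_spec⟩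
  have hle : (⊤ : Submodule R (Fin t → R)) ≤ Submodule.span R (τ '' E) ⊔ 𝔪 • ⊤ :=
    calc ⊤ = ((Submodule.span R (τ '' E)).map θ).comap θ := by rw [hθ, Submodule.comap_top]
      _ = Submodule.span R (τ '' E) ⊔ Submodule.pi Set.univ (fun _ => 𝔪) := by
        rw [Submodule.comap_map_eq, LinearMap.ker_compLeft, Submodule.ker_mkQ]
      _ ≤ _ := sup_le_sup_left (pi_univ_le_smul_top 𝔪 t) _
  exact Submodule.exists_sub_one_mem_and_smul_le_of_fg_of_le_sup Module.Finite.fg_top le_rfl hle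

theorem exists_finset_card_le_smul_mem_span_of_injective {R M ι : Type*} [CommRing R]
    [AddCommGroup M] [Module R M] [Finite ι] (𝔪 : Ideal R) [𝔪.IsMaximal] {t : ℕ}
    {d : (Fin t → R) →ₗ[R] M} (hd : Function.Injective d) {σ : ι → M}
    (hσ : LinearMap.range d = Submodule.span R (Set.range σ)) :
    ∃ E : Finset ι, #E ≤ t ∧ ∃ r : R, r - 1 ∈ 𝔪 ∧
      ∀ i, r • σ i ∈ Submodule.span R (σ '' E) := by
  have hmem : ∀ i, σ i ∈ LinearMap.range d := fun i => hσ ▸ Submodule.subset_span ⟨i, rfl⟩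
  choose τ hτ using hmem
  have hdτ : d ∘ τ = σ := funext hτ
  have hspan : Submodule.span R (Set.range τ) = ⊤ := by
    apply Submodule.map_injective_of_injective hd
    rw [Submodule.map_span, ← Set.range_comp, hdτ, ← hσ, Submodule.map_top]
  obtain ⟨E, hE, r, hr, hrE⟩ := exists_finset_card_le_smul_top_le_span 𝔪 hspan
  refine ⟨E, hE, r, hr, fun i => ?_⟩
  have := Submodule.mem_map_of_mem (f := d)
    (hrE (Submodule.smul_mem_pointwise_smul (τ i) r ⊤ trivial))
  rwa [map_smul, hτ, Submodule.map_span, ← Set.image_comp, hdτ] at this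

end LocalGenerators

theorem finrank_add_one_le_of_injective {R M N : Type*} [CommRing R] [IsDomain R]
    [AddCommGroup M] [Module R M] [Module.Free R M] [Module.Finite R M]
    [AddCommGroup N] [Module R N] [Module.Finite R N]
    {d : M →ₗ[R] N} (hd : Function.Injective d) {π : N →ₗ[R] R}
    (hdπ : LinearMap.range d ≤ LinearMap.ker π) {x : N} (hx : π x ≠ 0) :
    Module.finrank R M + 1 ≤ Module.finrank R N := by
  have hinj : Function.Injective (d.coprod (LinearMap.toSpanSingleton R N x)) := by
    rw [← LinearMap.ker_eq_bot, LinearMap.ker_eq_bot']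
    rintro ⟨u, s⟩ h
    simp only [LinearMap.coprod_apply, LinearMap.toSpanSingleton_apply] at h
    have hs : s = 0 := by
      have := congrArg π h
      rw [map_add, hdπ (LinearMap.mem_range_self d u), map_smul, zero_add, map_zero,
        smul_eq_mul] at this
      exact (mul_eq_zero.mp this).resolve_right hx
    subst hs
    rw [zero_smul, add_zero, ← map_zero d] at h
    simp [hd h]
  simpa using LinearMap.finrank_le_finrank_of_injective hinj

section Monomials

variable {k : Type} [Field k] {n : ℕ}

def sqfreeExponent (A : Finset (Fin n)) : Fin n →₀ ℕ := ∑ v ∈ A, Finsupp.single v 1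

theorem sqfreeExponent_apply (A : Finset (Fin n)) (w : Fin n) :
    sqfreeExponent A w = if w ∈ A then 1 else 0 := by
  simp [sqfreeExponent, Finsupp.finsetSum_apply, Finsupp.single_apply]

theorem sqfreeExponent_le_sqfreeExponent {A B : Finset (Fin n)} :
    sqfreeExponent A ≤ sqfreeExponent B ↔ A ⊆ B := by
  simp only [Finsupp.le_def, sqfreeExponent_apply, subset_iff]
  grind

theorem tsub_sqfreeExponent_union_add {A B : Finset (Fin n)} {a : Fin n →₀ ℕ}
    (hA : sqfreeExponent A ≤ a) (hB : sqfreeExponent B ≤ a) :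
    a - sqfreeExponent (A ∪ B) + sqfreeExponent (B \ A) = a - sqfreeExponent A := by
  ext w
  have hAw := hA w
  have hBw := hB w
  simp only [sqfreeExponent_apply] at hAw hBw
  simp only [Finsupp.add_apply, Finsupp.tsub_apply, sqfreeExponent_apply, mem_union, mem_sdiff]
  grind

theorem mon_eq_monomial (A : Finset (Fin n)) : mon k n A = monomial (sqfreeExponent A) 1 := by
  simp only [mon, sqfreeExponent, monomial_sum_one, X]

theorem mon_ne_zero (A : Finset (Fin n)) : mon k n A ≠ 0 := by
  simp [mon_eq_monomial]

theorem mon_sdiff_mul (A B : Finset (Fin n)) :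
    mon k n (B \ A) * mon k n A = mon k n (A ∪ B) := by
  rw [mon, mon, ← prod_union disjoint_sdiff_self_left, sdiff_union_self_eq_union, union_comm,
    mon]

theorem subset_of_mon_dvd_mul {f : MvPolynomial (Fin n) k} {A B : Finset (Fin n)}
    (hf : constantCoeff f ≠ 0) (h : mon k n B ∣ f * mon k n A) : B ⊆ A := by
  obtain ⟨c, hc⟩ := h
  rw [mon_eq_monomial, mon_eq_monomial, mul_comm _ c] at hc
  have hcoeff := congrArg (coeff (sqfreeExponent A)) hc
  simp only [coeff_mul_monomial', le_refl, if_true, tsub_self, mul_one,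
    ← constantCoeff_eq] at hcoeff
  split_ifs at hcoeff with hle
  · exact sqfreeExponent_le_sqfreeExponent.mp hle
  · exact absurd hcoeff hf

end Monomials

section Syzygies

variable (k : Type) [Field k] {n q : ℕ} (S : ℕ → Finset (Fin n))

def syzygy (e : Fin (q + 1) × Fin (q + 1)) : Fin (q + 1) → MvPolynomial (Fin n) k :=
  Pi.single e.1 (mon k n (S e.2 \ S e.1)) - Pi.single e.2 (mon k n (S e.1 \ S e.2))

def cutMap (C : Finset (Fin (q + 1))) :
    (Fin (q + 1) → MvPolynomial (Fin n) k) →ₗ[MvPolynomial (Fin n) k] MvPolynomial (Fin n) k :=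
  ∑ i ∈ C, (LinearMap.proj i).smulRight (mon k n (S i))

/-- A monomial preimage of `x^a` under `piMap`, when there is one. -/
def normalForm (a : Fin n →₀ ℕ) : Fin (q + 1) → MvPolynomial (Fin n) k :=
  if h : ∃ i : Fin (q + 1), sqfreeExponent (S i) ≤ a then
    Pi.single h.choose (monomial (a - sqfreeExponent (S h.choose)) 1)
  else 0

def normalFormMap :
    MvPolynomial (Fin n) k →ₗ[k] Fin (q + 1) → MvPolynomial (Fin n) k :=
  (basisMonomials (Fin n) k).constr k (normalForm k S)

variable {k S}

theorem normalFormMap_monomial (a : Fin n →₀ ℕ) (c : k) :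
    normalFormMap k S (monomial a c) = c • normalForm k S (q := q) a := by
  have : monomial a c = c • basisMonomials (Fin n) k a := by
    rw [coe_basisMonomials, smul_monomial, smul_eq_mul, mul_one]
  rw [normalFormMap, this, map_smul, Module.Basis.constr_basis]

theorem cutMap_single (C : Finset (Fin (q + 1))) (i : Fin (q + 1)) (x : MvPolynomial (Fin n) k) :
    cutMap k S C (Pi.single i x) = if i ∈ C then x * mon k n (S i) else 0 := by
  simp [cutMap, Pi.single_apply]

theorem cutMap_syzygy (C : Finset (Fin (q + 1))) (e : Fin (q + 1) × Fin (q + 1)) :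
    cutMap k S C (syzygy k S e) =
      ((if e.1 ∈ C then 1 else 0) - (if e.2 ∈ C then 1 else 0)) * mon k n (S e.1 ∪ S e.2) := by
  rw [syzygy, map_sub, cutMap_single, cutMap_single, mon_sdiff_mul, mon_sdiff_mul,
    union_comm (S e.2)]
  split_ifs <;> ring

theorem cutMap_syzygy_of_not_crosses {C : Finset (Fin (q + 1))} {e : Fin (q + 1) × Fin (q + 1)}
    (h : ¬Crosses C e) : cutMap k S C (syzygy k S e) = 0 := by
  rw [cutMap_syzygy]
  simp only [Crosses, Xor, not_or, not_and, not_not] at h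
  by_cases h1 : e.1 ∈ C <;> simp_all

theorem cutMap_univ : cutMap k S univ = piMap k n q S := rfl

theorem syzygy_mem_ker_piMap (e : Fin (q + 1) × Fin (q + 1)) :
    syzygy k S e ∈ LinearMap.ker (piMap k n q S) := by
  simp [← cutMap_univ, cutMap_syzygy]

theorem single_sub_single_mem_span_syzygy {i j : Fin (q + 1)} {a : Fin n →₀ ℕ}
    (hi : sqfreeExponent (S i) ≤ a) (hj : sqfreeExponent (S j) ≤ a) :
    Pi.single i (monomial (a - sqfreeExponent (S i)) 1) -
        Pi.single j (monomial (a - sqfreeExponent (S j)) (1 : k)) ∈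
      Submodule.span (MvPolynomial (Fin n) k) (Set.range (syzygy k S)) := by
  have : monomial (a - sqfreeExponent (S i ∪ S j)) (1 : k) • syzygy k S (i, j) =
      Pi.single i (monomial (a - sqfreeExponent (S i)) 1) -
        Pi.single j (monomial (a - sqfreeExponent (S j)) 1) := by
    simp only [syzygy, smul_sub, ← Pi.single_smul, smul_eq_mul, mon_eq_monomial, monomial_mul,
      one_mul]
    rw [tsub_sqfreeExponent_union_add hi hj, union_comm, tsub_sqfreeExponent_union_add hj hi]
  exact this ▸ Submodule.smul_mem _ _ (Submodule.subset_span ⟨(i, j), rfl⟩)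

theorem sub_normalFormMap_piMap_mem_span_syzygy (v : Fin (q + 1) → MvPolynomial (Fin n) k) :
    v - normalFormMap k S (piMap k n q S v) ∈
      Submodule.span (MvPolynomial (Fin n) k) (Set.range (syzygy k S)) := by
  set L := Submodule.span (MvPolynomial (Fin n) k) (Set.range (syzygy k S))
  let P : (Fin (q + 1) → MvPolynomial (Fin n) k) → Prop :=
    fun v => v - normalFormMap k S (piMap k n q S v) ∈ L
  have hadd : ∀ v w, P v → P w → P (v + w) := fun v w hv hw => by
    convert add_mem hv hw using 1
    simp only [map_add]
    abel
  have hmonomial : ∀ i a c, P (Pi.single i (monomial a c)) := by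
    intro i a c
    have hex : ∃ j : Fin (q + 1), sqfreeExponent (S j) ≤ a + sqfreeExponent (S i) :=
      ⟨i, le_add_self⟩
    have := Submodule.smul_of_tower_mem L c
      (single_sub_single_mem_span_syzygy (le_add_self (b := a)) hex.choose_spec)
    simp only [P, ← cutMap_univ, cutMap_single, mem_univ, if_true, mon_eq_monomial, monomial_mul,
      mul_one, normalFormMap_monomial, normalForm, dif_pos hex]
    convert this using 1
    rw [smul_sub, ← Pi.single_smul, ← Pi.single_smul, smul_monomial, smul_monomial,
      add_tsub_cancel_right, smul_eq_mul, mul_one]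
  have hsingle : ∀ i p, P (Pi.single i p) := fun i p => by
    induction p using MvPolynomial.induction_on' with
    | monomial a c => exact hmonomial i a c
    | add p p' hp hp' => rw [Pi.single_add]; exact hadd _ _ hp hp'
  rw [← univ_sum_single v]
  exact Finset.sum_induction _ P hadd (by simp [P]) fun i _ => hsingle i (v i)

theorem ker_piMap_eq_span_syzygy :
    LinearMap.ker (piMap k n q S) =
      Submodule.span (MvPolynomial (Fin n) k) (Set.range (syzygy k S)) := by
  refine le_antisymm (fun v hv => ?_)
    (Submodule.span_le.mpr (Set.range_subset_iff.mpr syzygy_mem_ker_piMap))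
  simpa [LinearMap.mem_ker.mp hv] using sub_normalFormMap_piMap_mem_span_syzygy (S := S) v

theorem cutCondition_of_smul_syzygy_mem_span {E : Finset (Fin (q + 1) × Fin (q + 1))}
    {f : MvPolynomial (Fin n) k} (hf : constantCoeff f ≠ 0)
    (hE : ∀ e, f • syzygy k S e ∈
      Submodule.span (MvPolynomial (Fin n) k) (syzygy k S (q := q) '' E)) :
    CutCondition (univ : Finset (Fin (q + 1))) (fun i => S i) E := by
  intro C i _ j _ hi hj
  have hfij : cutMap k S C (f • syzygy k S (i, j)) = f * mon k n (S i ∪ S j) := by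
    simp [cutMap_syzygy, hi, hj]
  have hfij_ne : f * mon k n (S i ∪ S j) ≠ 0 :=
    mul_ne_zero (fun h => hf (by rw [h, map_zero])) (mon_ne_zero _)
  refine ⟨?_, fun e₀ he₀ => ?_⟩
  · by_contra! hno
    have hle : Submodule.span _ (syzygy k S (q := q) '' E) ≤ LinearMap.ker (cutMap k S C) :=
      Submodule.span_le.mpr <| Set.image_subset_iff.mpr fun e he =>
        cutMap_syzygy_of_not_crosses (hno e he)
    exact hfij_ne (hfij ▸ hle (hE (i, j)))
  · have hle : Submodule.span _ (syzygy k S (q := q) '' E) ≤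
        Submodule.comap (cutMap k S C) (Ideal.span {mon k n (S e₀.1 ∪ S e₀.2)}) := by
      refine Submodule.span_le.mpr <| Set.image_subset_iff.mpr fun e he => ?_
      by_cases hc : Crosses C e
      · rw [he₀ e he hc]
        exact Ideal.mem_span_singleton'.mpr ⟨_, (cutMap_syzygy C e₀).symm⟩
      · simp [cutMap_syzygy_of_not_crosses hc]
    have := hle (hE (i, j))
    rw [Submodule.mem_comap, hfij, Ideal.mem_span_singleton] at this
    exact subset_of_mon_dvd_mul hf this

end Syzygies

/-- if `I ⊆ k[x_1,…,x_n]` has projective dimension one and is minimally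
generated by `q+1` square-free monomials `m_0,…,m_q`, then `q + 1 ≤ n`. -/
theorem statement8 (k : Type) [Field k] (n q : ℕ)
    (S : ℕ → Finset (Fin n))
    (hmin : MinGen n q S)
    (hpd : PdOne k n q S) :
    q + 1 ≤ n := by
  obtain ⟨⟨t, d, hd, hrange⟩, hker⟩ := hpd
  have htq : t + 1 ≤ q + 1 := by
    simpa using finrank_add_one_le_of_injective hd hrange.le
      (x := Pi.single 0 1) (by simp [← cutMap_univ, cutMap_single, mon_ne_zero])
  have ht : t ≠ 0 := by
    rintro rfl
    exact hker (hrange ▸ LinearMap.range_eq_bot.mpr (Subsingleton.elim d 0))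
  have := RingHom.ker_isMaximal_of_surjective (constantCoeff : MvPolynomial (Fin n) k →+* k)
    fun c => ⟨C c, constantCoeff_C _ c⟩
  obtain ⟨E, hE, r, hr, hrE⟩ := exists_finset_card_le_smul_mem_span_of_injective
    (RingHom.ker (constantCoeff : MvPolynomial (Fin n) k →+* k)) hd
    (hrange.trans ker_piMap_eq_span_syzygy)
  have hr : constantCoeff r ≠ 0 := by
    rw [RingHom.mem_ker, map_sub, map_one, sub_eq_zero] at hr
    simp [hr]
  have hantichain : ∀ i j : Fin (q + 1), S i ⊆ S j → i = j := fun i j hij =>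
    by_contra fun hne => hmin i (Fin.is_le i) j (Fin.is_le j) (Fin.val_ne_of_ne hne) hij
  calc q + 1 = #(univ : Finset (Fin (q + 1))) := (card_fin _).symm
    _ ≤ #(univ.biUnion fun i : Fin (q + 1) => S i) :=
      (cutCondition_of_smul_syzygy_mem_span hr hrE).card_le_card_biUnion
        (by rw [card_fin]; omega) (by simp) (by rw [card_fin]; omega)
        fun i _ j _ => hantichain i j
    _ ≤ n := (card_le_univ _).trans (Fintype.card_fin n).le

end
end

section
/- Let I be a square-free monomial ideal of projective dimension one in R = k[x_1,…,x_n] and r ≥ 1. The R-linear map ρ : F_{Ḡ^r} → K^r defined on basis elements by ρ(u_{(b,B)}) = e_{j_1} ∧ ⋯ ∧ e_{j_i} ⊗ T^{b'}, where B = {j_1 < ⋯ < j_i} and b' = b − Σ_{j∈B} f_j, is bijective in each homological degree and commutes with the differentials; hence the chain complexes F_{Ḡ^r} and K^r are isomorphic. -/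
open Finset MvPolynomial

set_option synthInstance.maxHeartbeats 1000000
set_option maxHeartbeats 1000000

noncomputable section

/-- The homogeneous maximal ideal `(x_1, …, x_n)` of `R`. -/
def mxI (k : Type) [Field k] (n : ℕ) : Ideal (MvPolynomial (Fin n) k) :=
  Ideal.span (Set.range MvPolynomial.X)

/-- The free module underlying the complex `F_{Ḡ^r}`, with basis indexed by all pairs
`(b, B)`. -/
abbrev FModule (k : Type) [Field k] (n : ℕ) :=
  ((ℕ → ℕ) × Finset ℕ) →₀ MvPolynomial (Fin n) k

/-- The differential of the (homogenized) cellular chain complex `F_{Ḡ^r}`: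
`∂(u_{(b,B)}) = Σ_{k} (−1)^{k+1} (lcm(m_{j_k},m_{τ(j_k)})/m_{j_k}) u_{(b,B∖{j_k})}
 + Σ_{k} (−1)^{k} (lcm(m_{j_k},m_{τ(j_k)})/m_{τ(j_k)}) u_{(b−f_{j_k}+f_{τ(j_k)},B∖{j_k})}`,
where `j_k` is the `k`-th smallest element of `B`. -/
noncomputable def diffD (k : Type) [Field k] (n : ℕ) (S : ℕ → Finset (Fin n))
    (τ : ℕ → ℕ) : FModule k n →ₗ[MvPolynomial (Fin n) k] FModule k n :=
  Finsupp.linearCombination _ fun p =>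
    ∑ j ∈ p.2, ((-1 : MvPolynomial (Fin n) k) ^ (p.2.filter (· < j)).card) •
      (((∏ x ∈ S (τ j) \ S j, X x : MvPolynomial (Fin n) k)) •
          Finsupp.single (p.1, p.2.erase j) (1 : MvPolynomial (Fin n) k)
        - ((∏ x ∈ S j \ S (τ j), X x : MvPolynomial (Fin n) k)) •
          Finsupp.single (moveSet τ p.1 {j}, p.2.erase j) (1 : MvPolynomial (Fin n) k))

/-- The augmentation `F_0 → I^r`, `u_{(b,∅)} ↦ m^b`. -/
noncomputable def augE (k : Type) [Field k] (n q : ℕ) (S : ℕ → Finset (Fin n)) :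
    FModule k n →ₗ[MvPolynomial (Fin n) k] MvPolynomial (Fin n) k :=
  Finsupp.linearCombination _ fun p => if p.2 = ∅ then mPow k n q S p.1 else 0

/-- The degree-`i` part of the complex `F_{Ḡ^r}`: the (free) submodule spanned by the
basis elements `u_{(b,B)}` with `b ∈ N_r`, `B ⊆ supp(b)` and `|B| = i`. -/
noncomputable def AdmM (k : Type) [Field k] (n q r i : ℕ) : Submodule
    (MvPolynomial (Fin n) k) (FModule k n) :=
  Submodule.span _ ((fun p => Finsupp.single p (1 : MvPolynomial (Fin n) k)) ''
    {p | Nr q r p.1 ∧ p.2 ⊆ suppv q p.1 ∧ p.2.card = i})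

/-- The free module underlying the strand `K^r` of the Koszul complex, with basis
`e_{j_1} ∧ ⋯ ∧ e_{j_i} ⊗ T^w` indexed by pairs `(B, w)`, `B = {j_1 < ⋯ < j_i}`. -/
abbrev KModule (k : Type) [Field k] (n : ℕ) :=
  (Finset ℕ × (ℕ → ℕ)) →₀ MvPolynomial (Fin n) k

/-- The Koszul differential
`∂(e_{j_1} ∧ ⋯ ∧ e_{j_i} ⊗ w) = Σ_k (−1)^{k−1} e_{j_1} ∧ ⋯ ∧ ê_{j_k} ∧ ⋯ ∧ e_{j_i} ⊗ g_{j_k}·w`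
on the `T`-monomial basis, where
`g_j·T^w = (lcm(m_j,m_{τ(j)})/m_j)T^{w+f_j} − (lcm(m_j,m_{τ(j)})/m_{τ(j)})T^{w+f_{τ(j)}}`. -/
noncomputable def diffK (k : Type) [Field k] (n : ℕ) (S : ℕ → Finset (Fin n))
    (τ : ℕ → ℕ) : KModule k n →ₗ[MvPolynomial (Fin n) k] KModule k n :=
  Finsupp.linearCombination _ fun p =>
    ∑ j ∈ p.1, ((-1 : MvPolynomial (Fin n) k) ^ (p.1.filter (· < j)).card) •
      (((∏ x ∈ S (τ j) \ S j, X x : MvPolynomial (Fin n) k)) •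
          Finsupp.single (p.1.erase j, p.2 + fvec j) (1 : MvPolynomial (Fin n) k)
        - ((∏ x ∈ S j \ S (τ j), X x : MvPolynomial (Fin n) k)) •
          Finsupp.single (p.1.erase j, p.2 + fvec (τ j)) (1 : MvPolynomial (Fin n) k))

/-- The map `ρ : F_{Ḡ^r} → K^r`, `u_{(b,B)} ↦ e_{j_1} ∧ ⋯ ∧ e_{j_i} ⊗ T^{b'}` where
`B = {j_1 < ⋯ < j_i}` and `b' = b − Σ_{j∈B} f_j`. -/
noncomputable def rhoMap (k : Type) [Field k] (n : ℕ) :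
    FModule k n →ₗ[MvPolynomial (Fin n) k] KModule k n :=
  Finsupp.linearCombination _ fun p =>
    Finsupp.single (p.2, fun l => p.1 l - (if l ∈ p.2 then 1 else 0))
      (1 : MvPolynomial (Fin n) k)

/-- The degree-`i` part of `K^r = Λ^i F ⊗ S_{r−i}`: the submodule spanned by the basis
elements `(B, w)` with `B ⊆ {1,…,q}`, `|B| = i ≤ r`, and `w ∈ N_{r−i}`. -/
noncomputable def AdmK (k : Type) [Field k] (n q r i : ℕ) : Submodule
    (MvPolynomial (Fin n) k) (KModule k n) :=
  Submodule.span _ ((fun p => Finsupp.single p (1 : MvPolynomial (Fin n) k)) ''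
    {p | p.1 ⊆ Finset.Icc 1 q ∧ p.1.card = i ∧ i ≤ r ∧ Nr q (r - i) p.2})

def gmap (p : (ℕ → ℕ) × Finset ℕ) : Finset ℕ × (ℕ → ℕ) :=
  (p.2, fun l => p.1 l - (if l ∈ p.2 then 1 else 0))

def setM (q r i : ℕ) : Set ((ℕ → ℕ) × Finset ℕ) :=
  {p | Nr q r p.1 ∧ p.2 ⊆ suppv q p.1 ∧ p.2.card = i}

def setK (q r i : ℕ) : Set (Finset ℕ × (ℕ → ℕ)) :=
  {p | p.1 ⊆ Finset.Icc 1 q ∧ p.1.card = i ∧ i ≤ r ∧ Nr q (r - i) p.2}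

lemma rho_eq (k : Type) [Field k] (n : ℕ) :
    rhoMap k n = Finsupp.lmapDomain (MvPolynomial (Fin n) k) (MvPolynomial (Fin n) k) gmap := by
  ext p
  simp [rhoMap, gmap, Finsupp.linearCombination_single, Finsupp.lmapDomain_apply,
    Finsupp.mapDomain_single]

lemma mem_setM_pos {q r i : ℕ} {p : (ℕ → ℕ) × Finset ℕ} (hp : p ∈ setM q r i) :
    ∀ j ∈ p.2, 1 ≤ p.1 j := by
  intro j hj
  have := hp.2.1 hj
  simp only [suppv, Finset.mem_filter] at this
  omega

lemma setM_Icc {q r i : ℕ} {p : (ℕ → ℕ) × Finset ℕ} (hp : p ∈ setM q r i) :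
    p.2 ⊆ Finset.Icc 1 q := fun j hj => (Finset.mem_filter.mp (hp.2.1 hj)).1

lemma gmap_recover {q r i : ℕ} {p : (ℕ → ℕ) × Finset ℕ} (hp : p ∈ setM q r i) :
    (fun l => (gmap p).2 l + (if l ∈ p.2 then 1 else 0)) = p.1 := by
  funext l
  have := mem_setM_pos hp l
  simp only [gmap]
  by_cases h : l ∈ p.2
  · have := this h; simp [h]; omega
  · simp [h]

lemma gmap_injOn (q r i : ℕ) : Set.InjOn gmap (setM q r i) := by
  intro p1 h1 p2 h2 he
  have hB : p1.2 = p2.2 := congrArg Prod.fst he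
  have hb : p1.1 = p2.1 := by
    rw [← gmap_recover h1, ← gmap_recover h2, he, hB]
  exact Prod.ext hb hB

lemma gmap_image (q r i : ℕ) : gmap '' setM q r i = setK q r i := by
  ext ⟨B, w⟩
  constructor
  · rintro ⟨⟨b, B'⟩, hp, he⟩
    have hp' : ((b, B') : (ℕ → ℕ) × Finset ℕ) ∈ setM q r i := hp
    obtain ⟨⟨hz, hsum⟩, hsub, hcard⟩ := hp
    have hB' : B' = B := congrArg Prod.fst he
    subst hB'
    have hw : w = fun l => b l - (if l ∈ B' then 1 else 0) := (congrArg Prod.snd he).symm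
    have hIcc : B' ⊆ Finset.Icc 1 q := setM_Icc hp'
    have hrange : B' ⊆ Finset.range (q + 1) := fun j hj => by
      have := Finset.mem_Icc.mp (hIcc hj); simp; omega
    have hpos : ∀ j ∈ B', 1 ≤ b j := mem_setM_pos hp'
    have hchi : ∑ j ∈ Finset.range (q + 1), (if j ∈ B' then 1 else 0) = i := by
      rw [Finset.sum_ite_mem, Finset.inter_eq_right.mpr hrange, Finset.sum_const,
        smul_eq_mul, mul_one, hcard]
    have hle : i ≤ r := by
      calc i = ∑ j ∈ B', 1 := by rw [Finset.sum_const, smul_eq_mul, mul_one, hcard]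
        _ ≤ ∑ j ∈ B', b j := Finset.sum_le_sum hpos
        _ ≤ ∑ j ∈ Finset.range (q + 1), b j :=
            Finset.sum_le_sum_of_subset hrange
        _ = r := hsum
    refine ⟨hIcc, hcard, hle, fun j hj => ?_, ?_⟩
    · have hnB : j ∉ B' := fun h => by
        have := Finset.mem_Icc.mp (hIcc h); omega
      rw [hw]; simpa [hnB] using hz j hj
    · rw [hw]
      rw [Finset.sum_tsub_distrib _ (fun x _ => by
        by_cases h : x ∈ B' <;> simp [h, hpos x]
        )]
      rw [hsum, hchi]
  · rintro ⟨hIcc, hcard, hle, hz, hsum⟩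
    refine ⟨(fun l => w l + (if l ∈ B then 1 else 0), B), ⟨⟨?_, ?_⟩, ?_, hcard⟩, ?_⟩
    · intro j hj
      have hnB : j ∉ B := fun h => by have := Finset.mem_Icc.mp (hIcc h); omega
      simpa [hnB] using hz j hj
    · have hrange : B ⊆ Finset.range (q + 1) := fun j hj => by
        have := Finset.mem_Icc.mp (hIcc hj); simp; omega
      rw [Finset.sum_add_distrib, hsum, Finset.sum_ite_mem,
        Finset.inter_eq_right.mpr hrange, Finset.sum_const, smul_eq_mul, mul_one, hcard]
      omega
    · intro j hj
      simp only [suppv, Finset.mem_filter]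
      exact ⟨hIcc hj, by simp [hj]⟩
    · simp only [gmap]
      refine Prod.ext rfl ?_
      funext l
      by_cases h : l ∈ B <;> simp [h]

lemma rho_single (k : Type) [Field k] (n : ℕ) (p : (ℕ → ℕ) × Finset ℕ)
    (c : MvPolynomial (Fin n) k) :
    rhoMap k n (Finsupp.single p c) = Finsupp.single (gmap p) c := by
  rw [rho_eq]
  simp [Finsupp.lmapDomain_apply, Finsupp.mapDomain_single]

lemma gmap_erase {b : ℕ → ℕ} {B : Finset ℕ} (hpos : ∀ m ∈ B, 1 ≤ b m) {j : ℕ}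
    (hj : j ∈ B) :
    gmap (b, B.erase j) =
      (B.erase j, (fun l => b l - (if l ∈ B then 1 else 0)) + fvec j) := by
  refine Prod.ext rfl ?_
  funext l
  simp only [gmap, Pi.add_apply, fvec, Finset.mem_erase]
  by_cases h : l = j
  · subst h
    have := hpos l hj
    simp [hj]
    omega
  · by_cases h2 : l ∈ B <;> simp [h, h2]

lemma gmap_move {τ : ℕ → ℕ} {b : ℕ → ℕ} {B : Finset ℕ} (hpos : ∀ m ∈ B, 1 ≤ b m)
    {j : ℕ} (hj : j ∈ B) (hne : τ j ≠ j) :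
    gmap (moveSet τ b {j}, B.erase j) =
      (B.erase j, (fun l => b l - (if l ∈ B then 1 else 0)) + fvec (τ j)) := by
  refine Prod.ext rfl ?_
  funext l
  simp only [gmap, Pi.add_apply, fvec, Finset.mem_erase, moveSet, Finset.sum_singleton]
  rcases eq_or_ne l j with h | h
  · subst h
    have h1 := hpos _ hj
    have h3 : ¬ (l = τ l) := fun e => hne e.symm
    simp [hj, h3]
  · rcases eq_or_ne l (τ j) with h3 | h3
    · subst h3
      by_cases h2 : τ j ∈ B
      · have h1 := hpos _ h2
        simp [hne, h, h2]
        omega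
      · simp [hne, h, h2]
    · by_cases h2 : l ∈ B <;> simp [h, h2, h3]

lemma comm_single (k : Type) [Field k] (n : ℕ) (S : ℕ → Finset (Fin n)) (τ : ℕ → ℕ)
    {q r i : ℕ} (hτ : ∀ m, 1 ≤ m → m ≤ q → τ m < m)
    {p : (ℕ → ℕ) × Finset ℕ} (hp : p ∈ setM q r i) :
    rhoMap k n (diffD k n S τ (Finsupp.single p 1)) =
      diffK k n S τ (rhoMap k n (Finsupp.single p 1)) := by
  obtain ⟨b, B⟩ := p
  have hpos : ∀ m ∈ B, 1 ≤ b m := mem_setM_pos hp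
  have hIcc : B ⊆ Finset.Icc 1 q := setM_Icc hp
  rw [rho_single]
  simp only [diffD, diffK, Finsupp.linearCombination_single, one_smul, gmap]
  rw [map_sum]
  refine Finset.sum_congr rfl fun j hj => ?_
  have hj' := Finset.mem_Icc.mp (hIcc hj)
  have hne : τ j ≠ j := Nat.ne_of_lt (hτ j hj'.1 hj'.2)
  rw [map_smul, map_sub, map_smul, map_smul, rho_single, rho_single,
    gmap_erase hpos hj, gmap_move hpos hj hne]

/-- `ρ` is bijective in each homological degree (it carries the degree-`i`
part of `F_{Ḡ^r}` isomorphically onto the degree-`i` part of `K^r`) and commutes with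
the differentials; hence the chain complexes `F_{Ḡ^r}` and `K^r` are isomorphic. -/
theorem statement12 (k : Type) [Field k] (n q : ℕ) (hq : 1 ≤ q)
    (S : ℕ → Finset (Fin n)) (hmin : MinGen n q S)
    (τ : ℕ → ℕ) (hτ : ∀ i, 1 ≤ i → i ≤ q → τ i < i)
    (hsyz : TreeSyz k n q S τ)
    (r : ℕ) (hr : 1 ≤ r) :
    (∀ i : ℕ, Submodule.map (rhoMap k n) (AdmM k n q r i) = AdmK k n q r i) ∧
    (∀ i : ℕ, ∀ x ∈ AdmM k n q r i, rhoMap k n x = 0 → x = 0) ∧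
    (∀ i : ℕ, ∀ x ∈ AdmM k n q r (i + 1),
      rhoMap k n (diffD k n S τ x) = diffK k n S τ (rhoMap k n x)) := by

  have hM : ∀ i, AdmM k n q r i
      = Finsupp.supported (MvPolynomial (Fin n) k) (MvPolynomial (Fin n) k) (setM q r i) :=
    fun i => (Finsupp.supported_eq_span_single _ _).symm
  have hK : ∀ i, AdmK k n q r i
      = Finsupp.supported (MvPolynomial (Fin n) k) (MvPolynomial (Fin n) k) (setK q r i) :=
    fun i => (Finsupp.supported_eq_span_single _ _).symm
  refine ⟨fun i => ?_, fun i x hx hx0 => ?_, fun i x hx => ?_⟩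
  · rw [hM, hK, rho_eq, Finsupp.lmapDomain_supported, gmap_image]
  · rw [hM, Finsupp.mem_supported] at hx
    rw [rho_eq] at hx0
    simp only [Finsupp.lmapDomain_apply] at hx0
    refine Finsupp.mapDomain_injOn (setM q r i) (gmap_injOn q r i) hx (by simp) ?_
    rw [hx0, Finsupp.mapDomain_zero]
  · induction hx using Submodule.span_induction with
    | mem x hxm =>
        obtain ⟨p, hp, rfl⟩ := hxm
        exact comm_single k n S τ hτ hp
    | zero => simp
    | add x y _ _ h1 h2 => simp only [map_add, h1, h2]
    | smul c x _ h1 => simp only [map_smul, h1]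

end
end
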